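/- arXiv:1111.3248 — 2 statements merged into one kernel-verified Lean document; each statement's English description precedes it below -/
import Mathlib

section
/- Let f: N → M be continuous with M path-connected and N simply connected and path-connected, with basepoints n₀ ∈ N, m₀ = f(n₀). Then the map ι: ΛM → P(f,f) sending a based loop γ to (n₀, γ, n₀) induces a bijection on path components π₀(ΛM) → π₀(P(f,f)). -/
open unitInterval

/-- The homotopy pullback `P(f,f) = {(x, γ, y) : f x = γ 0, f y = γ 1}`. -/
def HPullback {N M : Type*} [TopologicalSpace N] [TopologicalSpace M] (f : C(N, M)) :
    Type _ :=
  {q : N × C(I, M) × N // f q.1 = q.2.1 0 ∧ f q.2.2 = q.2.1 1}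

instance {N M : Type*} [TopologicalSpace N] [TopologicalSpace M] (f : C(N, M)) :
    TopologicalSpace (HPullback f) :=
  instTopologicalSpaceSubtype

/-- The fibre inclusion `ι : ΛM → P(f,f)`, `γ ↦ (n₀, γ, n₀)`. -/
def fibreIncl {N M : Type*} [TopologicalSpace N] [TopologicalSpace M] (f : C(N, M))
    (n₀ : N) (γ : Path (f n₀) (f n₀)) : HPullback f :=
  ⟨(n₀, γ.toContinuousMap, n₀), by simp⟩

/-!
A path in `P(f,f)` from `ι γ₀` to `ι γ₁` is a free homotopy from `γ₀` to `γ₁` whose endpoints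
trace loops `α`, `β` at `n₀` in `N`; such a square gives `γ₀ ⬝ f∘β ≃ f∘α ⬝ γ₁` rel endpoints, and
`f∘α`, `f∘β` are null-homotopic because `N` is simply connected, so `γ₀ ≃ γ₁`. For surjectivity,
join the ends `x`, `y` of `(x, c, y)` to `n₀` by paths `a`, `b` in `N`: shrinking the loop
`f∘a ⬝ c ⬝ (f∘b)⁻¹` onto its middle segment while sliding its ends along `a` and `b` is a path
in `P(f,f)` from `ι (f∘a ⬝ c ⬝ (f∘b)⁻¹)` to `(x, c, y)`.
-/

section Paths

variable {X : Type*} [TopologicalSpace X]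

theorem Path.joined_iff_homotopic {x y : X} {p q : Path x y} : Joined p q ↔ p.Homotopic q := by
  constructor
  · rintro ⟨P⟩
    refine ⟨⟨⟨⟨fun z => P z.1 z.2, by fun_prop⟩, fun s => by simp, fun s => by simp⟩, ?_⟩⟩
    rintro t s (rfl | rfl) <;> simp
  · rintro ⟨F⟩
    exact ⟨⟨⟨F.eval, Path.continuous_uncurry_iff.mp F.continuous⟩, F.eval_zero, F.eval_one⟩⟩

theorem Path.Homotopic.trans_of_homotopy {a b c d : X} {γ₀ : Path a b} {γ₁ : Path c d}
    (H : (γ₀ : C(I, X)).Homotopy γ₁) {u : Path a c} {v : Path b d}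
    (hu : ∀ t, H (t, 0) = u t) (hv : ∀ t, H (t, 1) = v t) :
    (γ₀.trans v).Homotopic (u.trans γ₁) := by
  have := (Path.Homotopic.map_trans_evalAt H Path.id).pathCast γ₀.source.symm γ₁.target.symm
  convert this using 1 <;> ext s <;> simp only [Path.cast_coe, Path.trans_apply] <;> split_ifs
  · rfl
  · exact (hv _).symm
  · exact (hu _).symm
  · rfl

theorem Path.exists_homotopy_trans_trans_symm {x' x y y' : X} (a : Path x' x) (c : Path x y)
    (b : Path y' y) :
    ∃ H : (a.trans (c.trans b.symm) : C(I, X)).Homotopy c,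
      ∀ t, H (t, 0) = a t ∧ H (t, 1) = b t := by
  -- At time `t` the loop is run over `[t/2, 1 - t/4]`, whose ends trace `a` and `b`;
  -- at `t = 1` this is the `c`-segment `[1/2, 3/4]`.
  let g (z : I × I) : X := (a.trans (c.trans b.symm)).extend (z.2 + z.1 * (1 / 2 - 3 / 4 * z.2))
  have hg₀ (s : I) : g (0, s) = a.trans (c.trans b.symm) s := by simp [g]
  have hg₁ (s : I) : g (1, s) = c s := by
    have := nonneg s
    have := le_one s
    simp only [g, Set.Icc.coe_one, one_mul]
    rw [extend_trans_of_half_le _ _ (by linarith), extend_trans_of_le_half _ _ (by linarith)]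
    convert c.extend_extends' s using 2
    ring
  have hga (t : I) : g (t, 0) = a t := by
    have := le_one t
    simp only [g, Set.Icc.coe_zero, zero_add, mul_zero, sub_zero]
    rw [extend_trans_of_le_half _ _ (by linarith)]
    convert a.extend_extends' t using 2
    ring
  have hgb (t : I) : g (t, 1) = b t := by
    have := le_one t
    simp only [g, Set.Icc.coe_one]
    rw [extend_trans_of_half_le _ _ (by linarith), extend_trans_of_half_le _ _ (by linarith),
      extend_symm_apply]
    convert b.extend_extends' t using 2
    ring
  exact ⟨⟨⟨g, by fun_prop⟩, hg₀, hg₁⟩, fun t => ⟨hga t, hgb t⟩⟩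

theorem Path.Homotopic.of_trans_homotopic_refl {a b : X} {γ₀ γ₁ : Path a b} {u : Path a a}
    {v : Path b b} (hu : u.Homotopic (Path.refl a)) (hv : v.Homotopic (Path.refl b))
    (h : (γ₀.trans v).Homotopic (u.trans γ₁)) : γ₀.Homotopic γ₁ :=
  have hγ₀ : γ₀.Homotopic (γ₀.trans v) :=
    .trans ⟨(Path.Homotopy.transRefl γ₀).symm⟩ ((Path.Homotopic.refl γ₀).hcomp hv.symm)
  have hγ₁ : (u.trans γ₁).Homotopic γ₁ :=
    .trans (hu.hcomp (Path.Homotopic.refl γ₁)) ⟨Path.Homotopy.reflTrans γ₁⟩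
  (hγ₀.trans h).trans hγ₁

end Paths

namespace HPullback

variable {N M : Type*} [TopologicalSpace N] [TopologicalSpace M] {f : C(N, M)}

theorem joined_iff {z₀ z₁ : HPullback f} :
    Joined z₀ z₁ ↔ ∃ (α : Path z₀.1.1 z₁.1.1) (β : Path z₀.1.2.2 z₁.1.2.2)
      (H : z₀.1.2.1.Homotopy z₁.1.2.1), ∀ t, H (t, 0) = f (α t) ∧ H (t, 1) = f (β t) := by
  constructor
  · rintro ⟨p⟩
    refine ⟨⟨⟨fun t => (p t).1.1, by fun_prop⟩, by simp, by simp⟩,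
      ⟨⟨fun t => (p t).1.2.2, by fun_prop⟩, by simp, by simp⟩,
      ⟨⟨fun z => (p z.1).1.2.1 z.2, by fun_prop⟩, by simp, by simp⟩,
      fun t => ⟨((p t).2.1).symm, ((p t).2.2).symm⟩⟩
  · rintro ⟨α, β, H, hH⟩
    refine ⟨⟨⟨fun t => ⟨(α t, H.curry t, β t), (hH t).1.symm, (hH t).2.symm⟩, by fun_prop⟩,
      ?_, ?_⟩⟩ <;> apply Subtype.ext <;> simp

end HPullback

section FibreInclusion

variable {N M : Type*} [TopologicalSpace N] [TopologicalSpace M]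

theorem continuous_fibreIncl (f : C(N, M)) (n₀ : N) : Continuous (fibreIncl f n₀) := by
  unfold fibreIncl
  fun_prop

theorem homotopic_of_joined_fibreIncl [SimplyConnectedSpace N] {f : C(N, M)} {n₀ : N}
    {γ₀ γ₁ : Path (f n₀) (f n₀)} (h : Joined (fibreIncl f n₀ γ₀) (fibreIncl f n₀ γ₁)) :
    γ₀.Homotopic γ₁ := by
  obtain ⟨α, β, H, hH⟩ := HPullback.joined_iff.mp h
  have hf (δ : Path n₀ n₀) : (δ.map f.continuous).Homotopic (Path.refl (f n₀)) :=
    (SimplyConnectedSpace.paths_homotopic δ (Path.refl n₀)).map f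
  exact .of_trans_homotopic_refl (hf α) (hf β)
    (.trans_of_homotopy H (u := α.map f.continuous) (v := β.map f.continuous)
      (fun t => (hH t).1) (fun t => (hH t).2))

theorem exists_joined_fibreIncl [PathConnectedSpace N] (f : C(N, M)) (n₀ : N)
    (z : HPullback f) :
    ∃ γ : Path (f n₀) (f n₀), Joined (fibreIncl f n₀ γ) z := by
  obtain ⟨⟨x, c, y⟩, hx, hy⟩ := z
  obtain ⟨a⟩ := PathConnectedSpace.joined n₀ x
  obtain ⟨b⟩ := PathConnectedSpace.joined n₀ y
  obtain ⟨H, hH⟩ := Path.exists_homotopy_trans_trans_symm (a.map f.continuous)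
    (⟨c, hx.symm, hy.symm⟩ : Path (f x) (f y)) (b.map f.continuous)
  exact ⟨_, HPullback.joined_iff.mpr ⟨a, b, H, hH⟩⟩

end FibreInclusion

theorem fibreIncl_pi0_bijective_general {N M : Type*} [TopologicalSpace N] [TopologicalSpace M]
    [SimplyConnectedSpace N] (f : C(N, M)) (n₀ : N) :
    ∃ e : ZerothHomotopy (Path (f n₀) (f n₀)) → ZerothHomotopy (HPullback f),
      (∀ γ : Path (f n₀) (f n₀),
        e (Quotient.mk (pathSetoid _) γ) = Quotient.mk (pathSetoid _) (fibreIncl f n₀ γ)) ∧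
      Function.Bijective e := by
  refine ⟨Quotient.map (fibreIncl f n₀) fun _ _ h => h.map (continuous_fibreIncl f n₀),
    fun _ => rfl, ?_, ?_⟩
  · rintro ⟨γ₀⟩ ⟨γ₁⟩ h
    exact Quotient.sound (Path.joined_iff_homotopic.mpr
      (homotopic_of_joined_fibreIncl (Quotient.exact h)))
  · rintro ⟨z⟩
    obtain ⟨γ, hγ⟩ := exists_joined_fibreIncl f n₀ z
    exact ⟨⟦γ⟧, Quotient.sound hγ⟩

/-- For `N` simply connected and `M` path-connected, the fibre inclusion
`ι : ΛM → P(f,f)`, `γ ↦ (n₀, γ, n₀)`, induces a bijection on path components. -/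
theorem fibreIncl_pi0_bijective {N M : Type*} [TopologicalSpace N] [TopologicalSpace M]
    [SimplyConnectedSpace N] [PathConnectedSpace M] (f : C(N, M)) (n₀ : N) :
    ∃ e : ZerothHomotopy (Path (f n₀) (f n₀)) → ZerothHomotopy (HPullback f),
      (∀ γ : Path (f n₀) (f n₀),
        e (Quotient.mk (pathSetoid _) γ) = Quotient.mk (pathSetoid _) (fibreIncl f n₀ γ)) ∧
      Function.Bijective e :=
  fibreIncl_pi0_bijective_general f n₀
end

section
/- Let t be the involution on P(f,f) given by t(x, γ, y) = (y, γ̄, x). Under the bijection π₀(P(f,f)) ≅ π₁(M, m₀) (for N simply connected, M path-connected), the induced action of t on π₀ corresponds to the inversion map σ ↦ σ^{-1} on π₁(M, m₀). -/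
open unitInterval

/-- The map `t(x, γ, y) = (y, γ̄, x)` on the homotopy pullback, where `γ̄(s) = γ(1-s)`. -/
def HPullback.swap {N M : Type*} [TopologicalSpace N] [TopologicalSpace M] (f : C(N, M))
    (q : HPullback f) : HPullback f :=
  ⟨(q.1.2.2, (q.1.2.1).comp ⟨unitInterval.symm, unitInterval.continuous_symm⟩, q.1.1),
    by simpa [unitInterval.symm] using q.2.symm⟩

/-!
Every path component of `P(f,f)` meets the fibre over `(n₀, n₀)`: join the endpoints of
`(x, γ, y)` to `n₀` by paths `p`, `r` in `N` and slide them back along `p`, `r`, carrying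
`(f ∘ p)|[s,1] · γ · (f ∘ r)|[s,1]⁻¹` along as the middle path. On the fibre, `t` sends the
loop `γ` to `γ̄`, whose class is the inverse of that of `γ`.
-/

namespace HPullback

variable {N M : Type*} [TopologicalSpace N] [TopologicalSpace M] {f : C(N, M)}

def mk (x y : N) (γ : Path (f x) (f y)) : HPullback f :=
  ⟨(x, γ.toContinuousMap, y), by simp⟩

theorem mk_eq_mk {x x' y y' : N} {γ : Path (f x) (f y)} {γ' : Path (f x') (f y')}
    (hx : x = x') (hy : y = y') (hγ : ⇑γ = ⇑γ') : mk x y γ = mk x' y' γ' := by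
  subst hx hy
  rw [Path.ext hγ]

theorem swap_mk (x y : N) (γ : Path (f x) (f y)) :
    HPullback.swap f (mk x y γ) = mk y x γ.symm :=
  rfl

theorem joined_mk_of_continuous_family {p r : I → N} (hp : Continuous p) (hr : Continuous r)
    (P : ∀ s, Path (f (p s)) (f (r s))) (hP : Continuous ↿P) :
    Joined (mk (p 0) (r 0) (P 0)) (mk (p 1) (r 1) (P 1)) :=
  ⟨⟨⟨fun s => mk (p s) (r s) (P s),
    (hp.prodMk ((ContinuousMap.continuous_of_continuous_uncurry _ hP).prodMk hr)).subtype_mk _⟩,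
    rfl, rfl⟩⟩

theorem joined_mk_of_homotopic {x y : N} {γ γ' : Path (f x) (f y)} (h : γ.Homotopic γ') :
    Joined (mk x y γ) (mk x y γ') := by
  obtain ⟨H⟩ := h
  simpa only [Path.Homotopy.eval_zero, Path.Homotopy.eval_one] using
    joined_mk_of_continuous_family (p := fun _ => x) (r := fun _ => y)
      continuous_const continuous_const H.eval H.continuous

theorem exists_joined_mk_of_paths {x x' y y' : N} (p : Path x' x) (r : Path y' y)
    (γ : Path (f x) (f y)) : ∃ γ' : Path (f x') (f y'), Joined (mk x' y' γ') (mk x y γ) := by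
  let pf := p.map f.continuous
  let rf := r.map f.continuous
  let γ₁ : Path (pf 1) (rf 1) := γ.cast (by simp) (by simp)
  let P : ∀ s, Path (f (p s)) (f (r s)) := fun s =>
    (pf.subpath s 1).trans (γ₁.trans (rf.subpath s 1).symm)
  have hsub : ∀ {a b : M} (δ : Path a b), Continuous ↿fun s => δ.subpath s 1 := fun δ =>
    δ.subpath_continuous_family.comp
      (by fun_prop : Continuous fun u : I × I => (u.1, (1 : I), u.2))
  have hP : Continuous ↿P :=
    Path.trans_continuous_family _ (hsub pf) _ <| Path.trans_continuous_family _
      (γ₁.continuous.comp continuous_snd) _ (Path.symm_continuous_family _ (hsub rf))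
  refine ⟨(P 0).cast (by simp) (by simp), ?_⟩
  have hslide := joined_mk_of_continuous_family p.continuous r.continuous P hP
  have hend : (P 1).Homotopic γ₁ := by
    simp only [P, Path.subpath_self, Path.refl_symm]
    exact ⟨(Path.Homotopy.reflTrans _).trans (Path.Homotopy.transRefl _)⟩
  rw [mk_eq_mk (γ' := P 0) p.source.symm r.source.symm rfl,
    mk_eq_mk (γ' := γ₁) p.target.symm r.target.symm rfl]
  exact hslide.trans (joined_mk_of_homotopic hend)

theorem exists_joined_mk [PathConnectedSpace N] (x₀ y₀ : N) (q : HPullback f) :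
    ∃ γ : Path (f x₀) (f y₀), Joined (mk x₀ y₀ γ) q := by
  obtain ⟨⟨x, γ, y⟩, hx, hy⟩ := q
  exact exists_joined_mk_of_paths (PathConnectedSpace.somePath x₀ x)
    (PathConnectedSpace.somePath y₀ y) ⟨γ, hx.symm, hy.symm⟩

end HPullback

theorem swap_pi0_is_inversion_general {N M : Type*} [TopologicalSpace N] [TopologicalSpace M]
    [SimplyConnectedSpace N] (f : C(N, M)) (n₀ : N)
    (e : ZerothHomotopy (HPullback f) ≃ FundamentalGroup M (f n₀))
    (he : ∀ γ : Path (f n₀) (f n₀),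
      e (Quotient.mk (pathSetoid _) (fibreIncl f n₀ γ)) =
        @FundamentalGroup.fromPath M _ (f n₀) (Quotient.mk (Path.Homotopic.setoid (f n₀) (f n₀)) γ))
    (T : ZerothHomotopy (HPullback f) → ZerothHomotopy (HPullback f))
    (hT : ∀ q : HPullback f,
      T (Quotient.mk (pathSetoid _) q) = Quotient.mk (pathSetoid _) (HPullback.swap f q)) :
    ∀ c : ZerothHomotopy (HPullback f), e (T c) = (e c)⁻¹ := by
  rintro ⟨q⟩
  obtain ⟨γ, hγ⟩ : ∃ γ, Joined (fibreIncl f n₀ γ) q := HPullback.exists_joined_mk n₀ n₀ q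
  have hswap : HPullback.swap f (fibreIncl f n₀ γ) = fibreIncl f n₀ γ.symm :=
    HPullback.swap_mk n₀ n₀ γ
  change e (T (Quotient.mk _ q)) = (e (Quotient.mk _ q))⁻¹
  rw [← Quotient.sound hγ, hT, hswap, he, he]
  rfl

/-- Under the identification `π₀(P(f,f)) ≅ π₁(M, m₀)` (for `N` simply connected and `M`
path-connected), the involution `t(x, γ, y) = (y, γ̄, x)` corresponds to inversion
`σ ↦ σ⁻¹` in `π₁(M, m₀)`. -/
theorem swap_pi0_is_inversion {N M : Type*} [TopologicalSpace N] [TopologicalSpace M]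
    [SimplyConnectedSpace N] [PathConnectedSpace M] (f : C(N, M)) (n₀ : N)
    (e : ZerothHomotopy (HPullback f) ≃ FundamentalGroup M (f n₀))
    (he : ∀ γ : Path (f n₀) (f n₀),
      e (Quotient.mk (pathSetoid _) (fibreIncl f n₀ γ)) =
        @FundamentalGroup.fromPath M _ (f n₀) (Quotient.mk (Path.Homotopic.setoid (f n₀) (f n₀)) γ))
    (T : ZerothHomotopy (HPullback f) → ZerothHomotopy (HPullback f))
    (hT : ∀ q : HPullback f,
      T (Quotient.mk (pathSetoid _) q) = Quotient.mk (pathSetoid _) (HPullback.swap f q)) :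
    ∀ c : ZerothHomotopy (HPullback f), e (T c) = (e c)⁻¹ :=
  swap_pi0_is_inversion_general f n₀ e he T hT
end
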